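/- For every natural number n, r₃(4n) = r₃(n), where r₃(m) denotes the number of triples (x,y,z) ∈ ℤ³ with x² + y² + z² = m. -/
import Mathlib


/-- Number of representations of `m` as a sum of three integer squares. -/
noncomputable def r3 (m : ℕ) : ℕ :=
  Set.ncard {p : ℤ × ℤ × ℤ | p.1 ^ 2 + p.2.1 ^ 2 + p.2.2 ^ 2 = (m : ℤ)}

lemma zmod4_aux : ∀ a b c : ZMod 4, a ^ 2 + b ^ 2 + c ^ 2 = 0 →
    (ZMod.castHom (by norm_num : (2:ℕ) ∣ 4) (ZMod 2) a = 0 ∧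
     ZMod.castHom (by norm_num : (2:ℕ) ∣ 4) (ZMod 2) b = 0 ∧
     ZMod.castHom (by norm_num : (2:ℕ) ∣ 4) (ZMod 2) c = 0) := by decide

lemma even_of_sq_sum (x y z : ℤ) (n : ℕ) (h : x ^ 2 + y ^ 2 + z ^ 2 = 4 * n) :
    Even x ∧ Even y ∧ Even z := by
  have h4 : ((x : ZMod 4)) ^ 2 + (y : ZMod 4) ^ 2 + (z : ZMod 4) ^ 2 = 0 := by
    have : ((x ^ 2 + y ^ 2 + z ^ 2 : ℤ) : ZMod 4) = 0 := by
      rw [h]; push_cast; rw [show (4 : ZMod 4) = 0 by decide]; ring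
    push_cast at this; exact this
  have H := zmod4_aux _ _ _ h4
  simp only [map_intCast] at H
  have d1 : (2 : ℤ) ∣ x := by exact_mod_cast (ZMod.intCast_zmod_eq_zero_iff_dvd x 2).mp H.1
  have d2 : (2 : ℤ) ∣ y := by exact_mod_cast (ZMod.intCast_zmod_eq_zero_iff_dvd y 2).mp H.2.1
  have d3 : (2 : ℤ) ∣ z := by exact_mod_cast (ZMod.intCast_zmod_eq_zero_iff_dvd z 2).mp H.2.2
  obtain ⟨a, ha⟩ := d1; obtain ⟨b, hb⟩ := d2; obtain ⟨c, hc⟩ := d3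
  exact ⟨⟨a, by omega⟩, ⟨b, by omega⟩, ⟨c, by omega⟩⟩

theorem r3_four_mul (n : ℕ) : r3 (4 * n) = r3 n := by
  have hset : {p : ℤ × ℤ × ℤ | p.1 ^ 2 + p.2.1 ^ 2 + p.2.2 ^ 2 = ((4 * n : ℕ) : ℤ)} =
      (fun p : ℤ × ℤ × ℤ => (2 * p.1, 2 * p.2.1, 2 * p.2.2)) ''
        {p : ℤ × ℤ × ℤ | p.1 ^ 2 + p.2.1 ^ 2 + p.2.2 ^ 2 = (n : ℤ)} := by
    ext ⟨x, y, z⟩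
    constructor
    · intro h
      simp only [Set.mem_setOf_eq] at h
      push_cast at h
      obtain ⟨⟨a, ha⟩, ⟨b, hb⟩, ⟨c, hc⟩⟩ := even_of_sq_sum x y z n h
      refine ⟨(a, b, c), ?_, by simp [ha, hb, hc, two_mul]⟩
      simp only [Set.mem_setOf_eq]
      subst ha hb hc
      nlinarith [h]
    · rintro ⟨⟨a, b, c⟩, hm, heq⟩
      simp only [Set.mem_setOf_eq] at hm ⊢
      simp only [Prod.mk.injEq] at heq
      obtain ⟨e1, e2, e3⟩ := heq
      subst e1 e2 e3
      push_cast
      ring_nf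
      ring_nf at hm
      linarith [hm]
  have hinj : Function.Injective (fun p : ℤ × ℤ × ℤ => (2 * p.1, 2 * p.2.1, 2 * p.2.2)) := by
    rintro ⟨a, b, c⟩ ⟨d, e, f⟩ h
    simp only [Prod.mk.injEq] at h
    simp only [Prod.mk.injEq]
    omega
  rw [r3, r3, hset, Set.ncard_image_of_injective _ hinj]
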